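/- In a finite edge-colored graph where each color class spans a clique on its vertex set, the graph contains a simple cycle with pairwise distinct edge colors if and only if it contains a 2-vertex-connected component (block) spanning edges of at least two different colors. -/
import Mathlib


/-- A simple cycle in a multigraph given by an endpoints map `ends : E → Sym2 V`. -/
def IsCycle {V E : Type} (ends : E → Sym2 V) (k : ℕ) (v : ZMod k → V)
    (e : ZMod k → E) : Prop :=
  2 ≤ k ∧ Function.Injective v ∧ Function.Injective e ∧
    ∀ i : ZMod k, ends (e i) = s(v i, v (i + 1))

/-- Two edges lie on a common simple cycle. -/
def OnCommonCycle {V E : Type} (ends : E → Sym2 V) (e₁ e₂ : E) : Prop :=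
  ∃ (k : ℕ) (v : ZMod k → V) (ed : ZMod k → E),
    IsCycle ends k v ed ∧ (∃ i, ed i = e₁) ∧ ∃ i, ed i = e₂

/-- Two edges lie in the same block (2-vertex-connected component): they are equal or lie
on a common simple cycle. -/
def SameBlock {V E : Type} (ends : E → Sym2 V) (e₁ e₂ : E) : Prop :=
  e₁ = e₂ ∨ OnCommonCycle ends e₁ e₂

lemma zmod_cast_inj {k a b : ℕ} (ha : a < k) (hb : b < k)
    (h : (a : ZMod k) = b) : a = b := by
  have h2 := congrArg ZMod.val h
  rwa [ZMod.val_cast_of_lt ha, ZMod.val_cast_of_lt hb] at h2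

lemma IsCycle.rot {V E : Type} {ends : E → Sym2 V} {k : ℕ} {v : ZMod k → V}
    {e : ZMod k → E} (h : IsCycle ends k v e) (s : ZMod k) :
    IsCycle ends k (fun i => v (i + s)) (fun i => e (i + s)) := by
  obtain ⟨hk, hv, he, hends⟩ := h
  refine ⟨hk, fun i j hij => ?_, fun i j hij => ?_, fun i => ?_⟩
  · exact add_right_cancel (hv hij)
  · exact add_right_cancel (he hij)
  · have := hends (i + s)
    simpa [add_right_comm] using this

lemma shortcut {V E C : Type} (ends : E → Sym2 V) (color : E → C)
    {k d : ℕ} {v : ZMod k → V} {e : ZMod k → E}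
    (hc : IsCycle ends k v e) (hd2 : 2 ≤ d) (hdk : d < k)
    (f : E) (hf : ends f = s(v (d : ZMod k), v (1 : ZMod k)))
    {m : ℕ} (hm1 : 1 ≤ m) (hmd : m < d)
    (hfm : color (e ((m : ℕ) : ZMod k)) ≠ color f) :
    ∃ (v' : ZMod d → V) (e' : ZMod d → E), IsCycle ends d v' e' ∧
      ∃ a b : ZMod d, color (e' a) ≠ color (e' b) := by
  obtain ⟨hk2, hv, he, hends⟩ := hc
  haveI : NeZero k := ⟨by omega⟩
  haveI : NeZero d := ⟨by omega⟩
  -- `f` is different from every edge strictly inside the arc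
  have hne : ∀ t : ℕ, 1 ≤ t → t ≤ d - 1 → f ≠ e ((t : ℕ) : ZMod k) := by
    intro t ht1 ht2 hft
    have h1 : ends (e ((t : ℕ) : ZMod k)) =
        s(v ((t : ℕ) : ZMod k), v ((t + 1 : ℕ) : ZMod k)) := by
      have h0 := hends ((t : ℕ) : ZMod k)
      have h2 : ((t : ℕ) : ZMod k) + 1 = ((t + 1 : ℕ) : ZMod k) := by push_cast; ring
      rwa [h2] at h0
    rw [← hft, hf, Sym2.eq_iff] at h1
    rcases h1 with ⟨hA, hB⟩ | ⟨hA, hB⟩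
    · have := zmod_cast_inj (by omega) (by omega) (hv hA)
      omega
    · have hdt : d = t + 1 := zmod_cast_inj (by omega) (by omega) (hv hA)
      have h1t : (1 : ℕ) = t := by
        refine zmod_cast_inj (by omega) (by omega) (hv ?_)
        simpa using hB
      have hmt : ((m : ℕ) : ZMod k) = ((t : ℕ) : ZMod k) := by
        have hmt0 : m = t := by omega
        rw [hmt0]
      rw [hft] at hfm
      rw [hmt] at hfm
      exact hfm rfl
  have hval : ∀ i : ZMod d, (i + 1).val = if i.val = d - 1 then 0 else i.val + 1 := by
    intro i
    have h1 : (1 : ZMod d).val = 1 := ZMod.val_one'' (by omega)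
    have hlt := ZMod.val_lt i
    rw [ZMod.val_add, h1]
    by_cases h : i.val = d - 1
    · rw [if_pos h, h]
      have hD : d - 1 + 1 = d := by omega
      rw [hD, Nat.mod_self]
    · rw [if_neg h, Nat.mod_eq_of_lt (by omega)]
  refine ⟨fun i => v ((i.val + 1 : ℕ) : ZMod k),
    fun i => if i.val = d - 1 then f else e ((i.val + 1 : ℕ) : ZMod k),
    ⟨hd2, ?_, ?_, ?_⟩, ?_⟩
  · -- injectivity of vertices
    intro i j hij
    have h2 := zmod_cast_inj (k := k)
      (by have := ZMod.val_lt i; omega) (by have := ZMod.val_lt j; omega) (hv hij)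
    exact ZMod.val_injective d (by omega)
  · -- injectivity of edges
    intro i j hij
    have hi := ZMod.val_lt i; have hj := ZMod.val_lt j
    dsimp only at hij
    by_cases h1 : i.val = d - 1 <;> by_cases h2 : j.val = d - 1
    · exact ZMod.val_injective d (by omega)
    · rw [if_pos h1, if_neg h2] at hij
      exact absurd hij (hne (j.val + 1) (by omega) (by omega))
    · rw [if_neg h1, if_pos h2] at hij
      exact absurd hij.symm (hne (i.val + 1) (by omega) (by omega))
    · rw [if_neg h1, if_neg h2] at hij
      have h3 := zmod_cast_inj (k := k) (by omega) (by omega) (he hij)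
      exact ZMod.val_injective d (by omega)
  · -- cycle condition
    intro i
    dsimp only
    have hi := ZMod.val_lt i
    by_cases h : i.val = d - 1
    · rw [if_pos h, hval i, if_pos h, hf]
      have e1 : i.val + 1 = d := by omega
      rw [e1]
      norm_num
    · rw [if_neg h, hval i, if_neg h]
      have h0 := hends ((i.val + 1 : ℕ) : ZMod k)
      have h2 : ((i.val + 1 : ℕ) : ZMod k) + 1 = ((i.val + 1 + 1 : ℕ) : ZMod k) := by
        push_cast; ring
      rw [h0, h2]
  · -- two colors present
    refine ⟨((m - 1 : ℕ) : ZMod d), ((d - 1 : ℕ) : ZMod d), ?_⟩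
    have hA : ((m - 1 : ℕ) : ZMod d).val = m - 1 := ZMod.val_cast_of_lt (by omega)
    have hB : ((d - 1 : ℕ) : ZMod d).val = d - 1 := ZMod.val_cast_of_lt (by omega)
    dsimp only
    rw [if_neg (by rw [hA]; omega), if_pos hB, hA]
    have hm : m - 1 + 1 = m := by omega
    rw [hm]
    exact hfm

lemma descent {V E C : Type} (ends : E → Sym2 V) (color : E → C)
    (hclique : ∀ (c : C) (a b : V), a ≠ b →
      (∃ e, color e = c ∧ a ∈ ends e) → (∃ e, color e = c ∧ b ∈ ends e) →
      ∃ e, color e = c ∧ ends e = s(a, b)) :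
    ∀ k : ℕ, (∃ (v : ZMod k → V) (e : ZMod k → E),
      IsCycle ends k v e ∧ ∃ a b : ZMod k, color (e a) ≠ color (e b)) →
    ∃ (k' : ℕ) (v : ZMod k' → V) (e : ZMod k' → E),
      IsCycle ends k' v e ∧ Function.Injective fun i => color (e i) := by
  intro k
  induction k using Nat.strong_induction_on with
  | _ k IH =>
  rintro ⟨v, e, hc, a, b, hab⟩
  by_cases hinj : Function.Injective fun i : ZMod k => color (e i)
  · exact ⟨k, v, e, hc, hinj⟩
  obtain ⟨i, j, hij, hne⟩ := Function.not_injective_iff.mp hinj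
  have hk2 := hc.1
  haveI : NeZero k := ⟨by omega⟩
  classical
  -- an index whose color differs from that of `e i`
  obtain ⟨m, hmc⟩ : ∃ m : ZMod k, color (e m) ≠ color (e i) := by
    by_cases h : color (e a) = color (e i)
    · exact ⟨b, fun hb => hab (h.trans hb.symm)⟩
    · exact ⟨a, h⟩
  -- normalize: find i' j' with the "other-color" witness strictly inside the arc
  obtain ⟨i', j', hcc, hmc', hMJ⟩ :
      ∃ i' j' : ZMod k, color (e i') = color (e j') ∧
        color (e m) ≠ color (e i') ∧ (m - i').val < (j' - i').val := by
    have hmj : m ≠ j := fun h => hmc (h ▸ hij.symm)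
    have hMneJ : (m - i).val ≠ (j - i).val := by
      intro hh
      exact hmj (by
        have := ZMod.val_injective k hh
        exact sub_left_injective.eq_iff.mp this)
    rcases lt_or_gt_of_ne hMneJ with h | h
    · exact ⟨i, j, hij, hmc, h⟩
    · refine ⟨j, i, hij.symm, by rwa [← hij], ?_⟩
      set δ := (j - i).val with hδ
      set μ := (m - i).val with hμ
      have hδ1 : 1 ≤ δ := by
        rcases Nat.eq_zero_or_pos δ with h0 | h0
        · exact absurd (ZMod.val_eq_zero _ |>.mp h0) (sub_ne_zero.mpr hne.symm)
        · exact h0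
      have hμk : μ < k := ZMod.val_lt _
      have hδk : δ < k := ZMod.val_lt _
      have e1 : m - j = ((μ - δ : ℕ) : ZMod k) := by
        have : m - j = (m - i) - (j - i) := by ring
        rw [this, ← ZMod.natCast_zmod_val (m - i), ← ZMod.natCast_zmod_val (j - i),
          ← hδ, ← hμ, ← Nat.cast_sub (by omega)]
      have e2 : i - j = ((k - δ : ℕ) : ZMod k) := by
        have h3 : ((k - δ : ℕ) : ZMod k) + ((δ : ℕ) : ZMod k) = 0 := by
          rw [← Nat.cast_add]
          have : k - δ + δ = k := by omega
          rw [this, ZMod.natCast_self]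
        have h4 : i - j = -(j - i) := by ring
        rw [h4, ← ZMod.natCast_zmod_val (j - i), ← hδ]
        linear_combination -h3
      rw [e1, e2, ZMod.val_cast_of_lt (by omega), ZMod.val_cast_of_lt (by omega)]
      omega
  -- rotate so that i' is at position 0
  have hrot := hc.rot i'
  set J := (j' - i').val with hJ
  set M := (m - i').val with hM
  have hJk : J < k := ZMod.val_lt _
  have hM1 : 1 ≤ M := by
    rcases Nat.eq_zero_or_pos M with h0 | h0
    · exact absurd (ZMod.val_eq_zero _ |>.mp h0)
        (sub_ne_zero.mpr (fun h => hmc' (by rw [h])))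
    · exact h0
  have hJ2 : 2 ≤ J := by omega
  have hJcast : ((J : ℕ) : ZMod k) = j' - i' := by rw [hJ, ZMod.natCast_zmod_val]
  have hMcast : ((M : ℕ) : ZMod k) = m - i' := by rw [hM, ZMod.natCast_zmod_val]
  -- find the chord using the clique hypothesis
  have hvne : v (((J : ℕ) : ZMod k) + i') ≠ v (1 + i') := by
    intro h
    have h2 := hc.2.1 h
    have h3 : ((J : ℕ) : ZMod k) = ((1 : ℕ) : ZMod k) := by
      have := add_right_cancel h2
      simpa using this
    have := zmod_cast_inj (by omega) (by omega) h3
    omega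
  obtain ⟨f, hfc, hfe⟩ := hclique (color (e i')) (v (((J : ℕ) : ZMod k) + i')) (v (1 + i'))
    hvne
    ⟨e (((J : ℕ) : ZMod k) + i'), by
      constructor
      · rw [hJcast, sub_add_cancel, ← hcc]
      · rw [hc.2.2.2]
        exact Sym2.mem_mk_left _ _⟩
    ⟨e i', rfl, by
      rw [hc.2.2.2]
      have : i' + 1 = 1 + i' := by ring
      rw [this]
      exact Sym2.mem_mk_right _ _⟩
  obtain ⟨v'', e'', hcyc, hbi⟩ := shortcut ends color hrot hJ2 hJk f hfe
    (m := M) hM1 hMJ (by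
      show color (e (((M : ℕ) : ZMod k) + i')) ≠ color f
      rw [hMcast, sub_add_cancel, hfc]
      exact hmc')
  exact IH J hJk ⟨v'', e'', hcyc, hbi⟩

/-- In a finite edge-colored graph where each color class spans a clique on its vertex set,
there is a simple cycle with pairwise distinct edge colors if and only if some block
(2-vertex-connected component) spans edges of at least two different colors. -/
theorem rainbow_cycle_iff_bichromatic_block {V E C : Type} [Fintype V] [Fintype E]
    (ends : E → Sym2 V) (color : E → C)
    (hclique : ∀ (c : C) (a b : V), a ≠ b →
      (∃ e, color e = c ∧ a ∈ ends e) → (∃ e, color e = c ∧ b ∈ ends e) →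
      ∃ e, color e = c ∧ ends e = s(a, b)) :
    (∃ (k : ℕ) (v : ZMod k → V) (e : ZMod k → E),
        IsCycle ends k v e ∧ Function.Injective fun i => color (e i)) ↔
    ∃ e₁ e₂ : E, SameBlock ends e₁ e₂ ∧ color e₁ ≠ color e₂ := by
  constructor
  · rintro ⟨k, v, e, hc, hinj⟩
    have hk2 := hc.1
    have h01 : (0 : ZMod k) ≠ 1 := by
      intro h
      have : (0 : ℕ) = 1 := zmod_cast_inj (k := k) (by omega) (by omega) (by exact_mod_cast h)
      omega
    exact ⟨e 0, e 1, Or.inr ⟨k, v, e, hc, ⟨0, rfl⟩, ⟨1, rfl⟩⟩, hinj.ne h01⟩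
  · rintro ⟨e₁, e₂, hsb, hcol⟩
    rcases hsb with rfl | ⟨k, v, ed, hc, ⟨i, hi⟩, ⟨j, hj⟩⟩
    · exact absurd rfl hcol
    · exact descent ends color hclique k ⟨v, ed, hc, i, j, by rw [hi, hj]; exact hcol⟩
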